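/- arXiv:2510.01689 — 2 statements merged into one kernel-verified Lean document; each statement's English description precedes it below -/
import Mathlib

section
/- Group incentive ratio upper bound for Maximum Nash Welfare: for every coalition size c ≥ 1, the following holds. Let v_1, …, v_n be additive valuations over m divisible goods such that each agent has strictly positive value for at least one good, let C ⊆ [n] with |C| ≤ c, and let v'_C be manipulated additive valuations (each corrupted agent still having strictly positive value for at least one good). Let x be any fractional allocation maximizing Nash welfare for the true profile v, and let x' be any fractional allocation maximizing Nash welfare for the manipulated profile (v'_C, v_{−C}). Then there exists an agent a ∈ C such that v_a(x'_a) ≤ 2·v_a(x_a). -/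
/-!
Maximum Nash welfare allocations are characterised by a first-order condition: if `x` maximises
`∏ₐ vₐ(xₐ)` over the convex set of fractional allocations, then differentiating along the segment
towards any other allocation `y` gives `∑ₐ vₐ(yₐ) / vₐ(xₐ) ≤ n`. Apply it twice: to `x` under `v`
with `y = x'`, and to `x'` under the manipulated profile with `y = x`. For an honest agent the two
ratios `rₐ = vₐ(x'ₐ) / vₐ(xₐ)` and `1 / rₐ` both appear, and `rₐ + 1 / rₐ ≥ 2`; summing leaves
`∑_{a ∈ C} rₐ ≤ 2 |C|`, so some corrupted agent has `rₐ ≤ 2`.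
-/

open Finset Set

/-- A fractional allocation: nonnegative entries, each good fully allocated. -/
def IsFracAlloc (n m : ℕ) (x : Fin n → Fin m → ℝ) : Prop :=
  (∀ a g, 0 ≤ x a g) ∧ ∀ g, ∑ a, x a g = 1

/-- The value of the bundle `y` under the additive valuation `v`. -/
noncomputable def addVal {m : ℕ} (v y : Fin m → ℝ) : ℝ := ∑ g, v g * y g

/-- `x` is a fractional allocation maximizing Nash welfare for the profile `v`. -/
def IsMNW (n m : ℕ) (v x : Fin n → Fin m → ℝ) : Prop :=
  IsFracAlloc n m x ∧
    ∀ y : Fin n → Fin m → ℝ, IsFracAlloc n m y →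
      (∏ a, addVal (v a) (y a)) ≤ ∏ a, addVal (v a) (x a)

theorem hasDerivAt_prod_one_add_mul {ι : Type*} [Fintype ι] (s : ι → ℝ) :
    HasDerivAt (fun t : ℝ => ∏ i, (1 + t * s i)) (∑ i, s i) 0 := by
  classical
  simpa using HasDerivAt.fun_finsetProd (u := univ) (x := (0 : ℝ))
    fun i _ => (hasDerivAt_mul_const (s i)).const_add 1

theorem sum_nonpos_of_isMaxOn_prod_one_add_mul {ι : Type*} [Fintype ι] (s : ι → ℝ)
    (hmax : IsMaxOn (fun t : ℝ => ∏ i, (1 + t * s i)) (Icc 0 1) 0) :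
    ∑ i, s i ≤ 0 := by
  have hcone : (1 : ℝ) ∈ posTangentConeAt (Icc (0 : ℝ) 1) 0 :=
    mem_posTangentConeAt_of_segment_subset (by simp [segment_eq_Icc])
  simpa using hmax.localize.hasFDerivWithinAt_nonpos
    (hasDerivAt_prod_one_add_mul s).hasFDerivAt.hasFDerivWithinAt hcone

/-- First-order condition at `V` for maximising a product along the segment towards `W`. -/
theorem sum_div_le_card_of_prod_segment_le {ι : Type*} [Fintype ι] {V W : ι → ℝ}
    (hV : ∀ i, 0 < V i) (hmax : ∀ t ∈ Icc (0 : ℝ) 1, ∏ i, ((1 - t) * V i + t * W i) ≤ ∏ i, V i) :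
    ∑ i, W i / V i ≤ Fintype.card ι := by
  have hprod_pos : 0 < ∏ i, V i := prod_pos fun i _ => hV i
  have hrescale : ∀ t : ℝ,
      ∏ i, (1 + t * (W i / V i - 1)) = (∏ i, ((1 - t) * V i + t * W i)) / ∏ i, V i := by
    intro t
    rw [← prod_div_distrib]
    refine prod_congr rfl fun i _ => ?_
    field_simp [(hV i).ne']
    ring
  have hnonpos := sum_nonpos_of_isMaxOn_prod_one_add_mul (fun i => W i / V i - 1) <|
    isMaxOn_iff.2 fun t ht => by
      simpa [hrescale, div_self hprod_pos.ne'] using (div_le_one hprod_pos).2 (hmax t ht)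
  simpa [sum_sub_distrib] using hnonpos

theorem addVal_nonneg {m : ℕ} {v y : Fin m → ℝ} (hv : ∀ g, 0 ≤ v g) (hy : ∀ g, 0 ≤ y g) :
    0 ≤ addVal v y :=
  sum_nonneg fun g _ => mul_nonneg (hv g) (hy g)

@[simp]
theorem addVal_add {m : ℕ} (v y z : Fin m → ℝ) : addVal v (y + z) = addVal v y + addVal v z :=
  dotProduct_add v y z

@[simp]
theorem addVal_smul {m : ℕ} (c : ℝ) (v y : Fin m → ℝ) : addVal v (c • y) = c * addVal v y :=
  dotProduct_smul c v y

theorem convex_isFracAlloc (n m : ℕ) : Convex ℝ {x | IsFracAlloc n m x} := by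
  intro x hx y hy s t hs ht hst
  refine ⟨fun a g => ?_, fun g => ?_⟩
  · simpa using add_nonneg (mul_nonneg hs (hx.1 a g)) (mul_nonneg ht (hy.1 a g))
  · simp [sum_add_distrib, ← mul_sum, hx.2 g, hy.2 g, hst]

theorem isFracAlloc_uniform {n : ℕ} (m : ℕ) (hn : 0 < n) :
    IsFracAlloc n m fun _ _ => (n : ℝ)⁻¹ :=
  ⟨fun _ _ => by positivity, fun _ => by simp [hn.ne']⟩

namespace IsMNW

variable {n m : ℕ} {v x : Fin n → Fin m → ℝ}

/-- Every agent values a maximum Nash welfare bundle positively: the uniform allocation already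
has positive Nash welfare. -/
theorem addVal_pos (hx : IsMNW n m v x) (hn : 0 < n) (hv : ∀ a g, 0 ≤ v a g)
    (hpos : ∀ a, ∃ g, 0 < v a g) (a : Fin n) : 0 < addVal (v a) (x a) := by
  have huniform_pos : ∀ b, 0 < addVal (v b) fun _ => (n : ℝ)⁻¹ := fun b => by
    obtain ⟨g, hg⟩ := hpos b
    exact sum_pos' (fun g _ => by have := hv b g; positivity) ⟨g, mem_univ g, by positivity⟩
  have hNW_pos : 0 < ∏ b, addVal (v b) (x b) :=
    (prod_pos fun b _ => huniform_pos b).trans_le (hx.2 _ (isFracAlloc_uniform m hn))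
  exact (addVal_nonneg (hv a) (hx.1.1 a)).lt_of_ne
    (prod_ne_zero_iff.1 hNW_pos.ne' a (mem_univ a)).symm

theorem sum_div_le (hx : IsMNW n m v x) (hV : ∀ a, 0 < addVal (v a) (x a))
    {y : Fin n → Fin m → ℝ} (hy : IsFracAlloc n m y) :
    ∑ a, addVal (v a) (y a) / addVal (v a) (x a) ≤ n := by
  simpa using sum_div_le_card_of_prod_segment_le hV fun t ht => by
    simpa using hx.2 _ (convex_isFracAlloc n m hx.1 hy (sub_nonneg.2 ht.2) ht.1 (by ring))

end IsMNW

theorem exists_mem_le_two_of_sum_le_card {ι : Type*} [Fintype ι] [DecidableEq ι] {C : Finset ι}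
    (hC : C.Nonempty) {r : ι → ℝ} (hr : ∀ i ∉ C, 0 < r i) (hsum : ∑ i, r i ≤ Fintype.card ι)
    (hinv : ∑ i ∈ Cᶜ, (r i)⁻¹ ≤ Fintype.card ι) :
    ∃ i ∈ C, r i ≤ 2 := by
  have hamgm : ∀ i ∈ Cᶜ, 2 - (r i)⁻¹ ≤ r i := fun i hi => by
    have hri := hr i (mem_compl.1 hi)
    have hsq : r i + (r i)⁻¹ - 2 = (r i - 1) ^ 2 / r i := by field_simp; ring
    have : 0 ≤ (r i - 1) ^ 2 / r i := by positivity
    linarith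
  have hcompl := sum_le_sum hamgm
  rw [sum_sub_distrib, sum_const, nsmul_eq_mul, card_compl,
    Nat.cast_sub (card_le_univ C)] at hcompl
  refine exists_le_of_sum_le hC ?_
  rw [sum_const, nsmul_eq_mul]
  linarith [sum_add_sum_compl C r]

theorem stmt2_general (n m : ℕ)
    (v v' : Fin n → Fin m → ℝ)
    (hv : ∀ a g, 0 ≤ v a g) (hv' : ∀ a g, 0 ≤ v' a g)
    (hpos : ∀ a, ∃ g, 0 < v a g) (hpos' : ∀ a, ∃ g, 0 < v' a g)
    (C : Finset (Fin n)) (hCne : C.Nonempty)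
    (hhonest : ∀ a ∉ C, v' a = v a)
    (x x' : Fin n → Fin m → ℝ)
    (hx : IsMNW n m v x) (hx' : IsMNW n m v' x') :
    ∃ a ∈ C, addVal (v a) (x' a) ≤ 2 * addVal (v a) (x a) := by
  have hn : 0 < n := hCne.choose.pos
  have hV := hx.addVal_pos hn hv hpos
  have hV' := hx'.addVal_pos hn hv' hpos'
  have hinv : ∑ a ∈ Cᶜ, (addVal (v a) (x' a) / addVal (v a) (x a))⁻¹ ≤ n :=
    calc ∑ a ∈ Cᶜ, (addVal (v a) (x' a) / addVal (v a) (x a))⁻¹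
        = ∑ a ∈ Cᶜ, addVal (v' a) (x a) / addVal (v' a) (x' a) :=
          sum_congr rfl fun a ha => by rw [inv_div, hhonest a (mem_compl.1 ha)]
      _ ≤ ∑ a, addVal (v' a) (x a) / addVal (v' a) (x' a) :=
          sum_le_sum_of_subset_of_nonneg (subset_univ _) fun a _ _ =>
            div_nonneg (addVal_nonneg (hv' a) (hx.1.1 a)) (hV' a).le
      _ ≤ n := hx'.sum_div_le hV' hx.1
  obtain ⟨a, haC, ha⟩ := exists_mem_le_two_of_sum_le_card hCne
    (r := fun a => addVal (v a) (x' a) / addVal (v a) (x a))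
    (fun a ha => div_pos (by simpa [hhonest a ha] using hV' a) (hV a))
    (by simpa using hx.sum_div_le hV hx'.1) (by simpa using hinv)
  exact ⟨a, haC, (div_le_iff₀ (hV a)).1 ha⟩

/-- GIR upper bound `2` for Maximum Nash Welfare. -/
theorem stmt2 (c : ℕ) (hc : 1 ≤ c) (n m : ℕ)
    (v v' : Fin n → Fin m → ℝ)
    (hv : ∀ a g, 0 ≤ v a g) (hv' : ∀ a g, 0 ≤ v' a g)
    (hpos : ∀ a, ∃ g, 0 < v a g) (hpos' : ∀ a, ∃ g, 0 < v' a g)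
    (C : Finset (Fin n)) (hCne : C.Nonempty) (hC : C.card ≤ c)
    (hhonest : ∀ a ∉ C, v' a = v a)
    (x x' : Fin n → Fin m → ℝ)
    (hx : IsMNW n m v x) (hx' : IsMNW n m v' x') :
    ∃ a ∈ C, addVal (v a) (x' a) ≤ 2 * addVal (v a) (x a) :=
  stmt2_general n m v v' hv hv' hpos hpos' C hCne hhonest x x' hx hx'
end

section
/- Coupling lemma for Round-Robin on the lifted instance: let ≻ be a profile of strict orderings of n agents over m divisible goods, run the combinatorial implementation of PS on ≻ (terminating after K steps with step lengths t^{(1)}, …, t^{(K)}), and run Round-Robin on the lifted profile ≻' over the set G of T = (n!)^m indivisible copies of each good. For k ∈ [K], define step k of RR(≻') to be the rounds T·Σ_{i=1}^{k−1} t^{(i)} + 1 through T·Σ_{i=1}^{k} t^{(i)} of RR(≻') (each round consisting of n consecutive picks by agents 1, …, n in order). For each agent a ∈ [n] and k ∈ [K], let g_{k,a} denote the unique good with a ∈ N(g_{k,a}, S^{(k−1)}), i.e., the good agent a eats during step k of PS. Then for every a ∈ [n] and k ∈ [K], during step k of RR(≻') agent a picks exactly T·t^{(k)} goods, all of which belong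 to G(g_{k,a}). -/
/-- A strict total ordering over goods, given as a list from most preferred to
least preferred: it must be a duplicate-free enumeration of all goods. -/
def IsOrder {γ : Type*} [Fintype γ] (l : List γ) : Prop :=
  l.Nodup ∧ ∀ g : γ, g ∈ l

/-- An additive valuation `v` (given by its values on single goods) is consistent
with the strict ordering `l` if strictly more valuable goods appear earlier. -/
def Consistent {γ : Type*} [DecidableEq γ] (v : γ → ℝ) (l : List γ) : Prop :=
  ∀ g g' : γ, v g > v g' → l.idxOf g < l.idxOf g'

/-- State of Round-Robin after `s` stages: the set of remaining goods, together
with the bundle picked so far by each agent.  At stage `s` (0-indexed), agent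
`s % n` picks his most preferred remaining good. -/
def rrState {γ : Type*} [DecidableEq γ] [Fintype γ] (n : ℕ) (hn : 0 < n)
    (pref : Fin n → List γ) : ℕ → Finset γ × (Fin n → Finset γ)
  | 0 => (Finset.univ, fun _ => ∅)
  | s + 1 =>
    let st := rrState n hn pref s
    let agent : Fin n := ⟨s % n, Nat.mod_lt s hn⟩
    match (pref agent).find? (fun g => decide (g ∈ st.1)) with
    | none => st
    | some g => (st.1.erase g, Function.update st.2 agent (insert g (st.2 agent)))

/-- The Round-Robin allocation: the bundle of agent `a` after all goods are picked. -/
def rr {γ : Type*} [DecidableEq γ] [Fintype γ] (n : ℕ) (hn : 0 < n)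
    (pref : Fin n → List γ) (a : Fin n) : Finset γ :=
  (rrState n hn pref (Fintype.card γ)).2 a

/-- Agent `a`'s most preferred good in the set `S` of available goods. -/
def psTop {n m : ℕ} (pref : Fin n → List (Fin m)) (S : Finset (Fin m)) (a : Fin n) :
    Option (Fin m) :=
  (pref a).find? (fun g => decide (g ∈ S))

/-- `N(g, S)`: the set of agents whose most preferred available good is `g`. -/
def psN {n m : ℕ} (pref : Fin n → List (Fin m)) (S : Finset (Fin m)) (g : Fin m) :
    Finset (Fin n) :=
  Finset.univ.filter (fun a => psTop pref S a = some g)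

/-- The available goods currently being eaten by at least one agent. -/
def psActive {n m : ℕ} (pref : Fin n → List (Fin m)) (S : Finset (Fin m)) :
    Finset (Fin m) :=
  S.filter (fun g => (psN pref S g).Nonempty)

open scoped Classical in
/-- Combinatorial implementation of Probabilistic Serial.
`psState pref k = (S⁽ᵏ⁾, x⁽ᵏ⁾, t⁽ᵏ⁾)`: after step `k`, the set of available
goods, the partial allocation, and the length `t⁽ᵏ⁾` of step `k` (with `t⁽⁰⁾ = 0`). -/
noncomputable def psState {n m : ℕ} (pref : Fin n → List (Fin m)) :
    ℕ → Finset (Fin m) × (Fin n → Fin m → ℝ) × ℝ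
  | 0 => (Finset.univ, fun _ _ => 0, 0)
  | k + 1 =>
    let st := psState pref k
    let tg : Fin m → ℝ := fun g => (1 - ∑ a, st.2.1 a g) / ((psN pref st.1 g).card : ℝ)
    if h : (psActive pref st.1).Nonempty then
      let t := (psActive pref st.1).inf' h tg
      (st.1.filter (fun g => ¬(g ∈ psActive pref st.1 ∧ tg g = t)),
        fun a g => if psTop pref st.1 a = some g then st.2.1 a g + t else st.2.1 a g,
        t)
    else st

/-- The fractional allocation output by Probabilistic Serial (the mechanism
terminates after at most `m` steps, since each step fully consumes a good). -/
noncomputable def psAlloc {n m : ℕ} (pref : Fin n → List (Fin m)) :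
    Fin n → Fin m → ℝ :=
  (psState pref m).2.1

/-- The lifted ordering over `T` indivisible copies of each of the `m` goods:
copies of a more preferred good come first, and copies of the same good are
ordered by increasing copy index. -/
def liftList {m : ℕ} (T : ℕ) (l : List (Fin m)) : List (Fin m × Fin T) :=
  l.flatMap fun g => (List.finRange T).map fun k => (g, k)

/-!
At the start of step `k + 1` of PS every agent `a` eats its top available good `g_a`, and every
good it prefers to `g_a` is already fully eaten. Round-Robin on the lifted instance mirrors this:
at the start of the corresponding block of rounds, exactly the first `T · Σ_a x⁽ᵏ⁾_{a,g}` copies of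
each good `g` are gone. Hence during the `n · T · t⁽ᵏ⁺¹⁾` stages of the block every agent's best
remaining copy is the lowest remaining copy of `g_a`, and copies never run out because
`T · Σ_a x⁽ᵏ⁺¹⁾_{a,g} ≤ T`. So each agent takes `T · t⁽ᵏ⁺¹⁾` copies of `g_a`, and the invariant
passes to the next step.
-/

open scoped Finset

theorem List.find?_eq_some_of_imp {α : Type*} {l : List α} {p q : α → Bool} {x : α}
    (h : l.find? p = some x) (hx : q x) (hqp : ∀ y, q y → p y) : l.find? q = some x := by
  rw [List.find?_eq_some_iff_append] at h ⊢
  obtain ⟨-, as, bs, rfl, has⟩ := h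
  refine ⟨hx, as, bs, rfl, fun y hy => ?_⟩
  have hpy := has y hy
  cases hq : q y
  · rfl
  · simp [hqp y hq] at hpy

theorem List.find?_finRange_le {T c : ℕ} (hc : c < T) :
    (List.finRange T).find? (fun j : Fin T => decide (c ≤ j)) = some ⟨c, hc⟩ := by
  rw [List.find?_eq_some_iff_getElem]
  refine ⟨by simp, c, by simpa using hc, by simp, fun j hj => by simpa using hj⟩

/-- The copies still available once the first `c g` copies of each good `g` are taken. -/
def remainingCopies {m : ℕ} (T : ℕ) (c : Fin m → ℕ) : Finset (Fin m × Fin T) :=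
  {p | c p.1 ≤ p.2}

theorem remainingCopies_erase {m T : ℕ} (c : Fin m → ℕ) {g : Fin m} (hg : c g < T) :
    (remainingCopies T c).erase (g, ⟨c g, hg⟩) =
      remainingCopies T (Function.update c g (c g + 1)) := by
  ext ⟨g', k⟩
  by_cases hg' : g' = g
  · subst hg'
    simp [remainingCopies, Fin.ext_iff]
    omega
  · simp [remainingCopies, hg']

theorem find?_liftList {m T : ℕ} {c : Fin m → ℕ} {l : List (Fin m)} {g : Fin m}
    (h : l.find? (fun g => decide (c g < T)) = some g) :
    ∃ hg : c g < T, (liftList T l).find? (· ∈ remainingCopies T c) = some (g, ⟨c g, hg⟩) := by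
  have hg : c g < T := by simpa using List.find?_some h
  refine ⟨hg, ?_⟩
  rw [List.find?_eq_some_iff_append] at h
  obtain ⟨-, as, bs, rfl, has⟩ := h
  rw [liftList, List.find?_flatMap, List.findSome?_eq_some_iff]
  refine ⟨as, g, bs, rfl, ?_, fun g' hg' => ?_⟩
  · simp [List.find?_map, remainingCopies, List.find?_finRange_le hg]
  · have hT : T ≤ c g' := by simpa using has g' hg'
    simp only [List.find?_map, Option.map_eq_none_iff, List.find?_eq_none]
    intro k _
    simp [remainingCopies]
    omega

section RoundRobin

variable {γ : Type*} [DecidableEq γ] [Fintype γ] {n : ℕ} (hn : 0 < n) (pref : Fin n → List γ)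

theorem rrState_succ_of_find?_eq_some {s : ℕ} {a : Fin n} (ha : (a : ℕ) = s % n) {g : γ}
    (h : (pref a).find? (· ∈ (rrState n hn pref s).1) = some g) :
    rrState n hn pref (s + 1) = ((rrState n hn pref s).1.erase g,
      Function.update (rrState n hn pref s).2 a (insert g ((rrState n hn pref s).2 a))) := by
  obtain rfl : a = ⟨s % n, Nat.mod_lt s hn⟩ := Fin.ext ha
  rw [rrState, h]

theorem rrState_succ_eq_or (s : ℕ) :
    rrState n hn pref (s + 1) = rrState n hn pref s ∨
      ∃ g, ∃ a : Fin n, rrState n hn pref (s + 1) =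
        ((rrState n hn pref s).1.erase g,
          Function.update (rrState n hn pref s).2 a (insert g ((rrState n hn pref s).2 a))) := by
  rcases h : (pref ⟨s % n, Nat.mod_lt s hn⟩).find? (· ∈ (rrState n hn pref s).1) with _ | g
  · left
    rw [rrState, h]
  · right
    exact ⟨g, _, rrState_succ_of_find?_eq_some hn pref rfl h⟩

theorem rrState_snd_mono (a : Fin n) : Monotone fun s => (rrState n hn pref s).2 a := by
  refine monotone_nat_of_le_succ fun s => ?_
  rcases rrState_succ_eq_or hn pref s with h | ⟨g, b, h⟩
  · rw [h]
  · rw [h]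
    by_cases hab : a = b
    · subst hab
      simp [Finset.subset_insert]
    · simp [hab]

theorem disjoint_rrState (s : ℕ) (a : Fin n) :
    Disjoint ((rrState n hn pref s).2 a) (rrState n hn pref s).1 := by
  induction s with
  | zero => simp [rrState]
  | succ s ih =>
    rcases rrState_succ_eq_or hn pref s with h | ⟨g, b, h⟩
    · rwa [h]
    · rw [h]
      by_cases hab : a = b
      · subst hab
        simpa [Finset.disjoint_insert_left] using ih.mono_right (Finset.erase_subset _ _)
      · simpa [hab] using ih.mono_right (Finset.erase_subset _ _)

end RoundRobin

section LiftedRoundRobin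

variable {n m : ℕ} (hn : 0 < n) (pref : Fin n → List (Fin m)) (T : ℕ)

abbrev liftedRR : ℕ → Finset (Fin m × Fin T) × (Fin n → Finset (Fin m × Fin T)) :=
  rrState n hn fun b => liftList T (pref b)

theorem liftedRR_succ {s₀ s : ℕ} (hs : s₀ ≤ s) {a : Fin n} (ha : (a : ℕ) = s % n)
    {c : Fin m → ℕ} (hR : (liftedRR hn pref T s).1 = remainingCopies T c) {g : Fin m}
    (hg : (pref a).find? (fun g => decide (c g < T)) = some g) :
    (liftedRR hn pref T (s + 1)).1 = remainingCopies T (Function.update c g (c g + 1)) ∧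
    ∀ b, #((liftedRR hn pref T (s + 1)).2 b \ (liftedRR hn pref T s₀).2 b) =
        #((liftedRR hn pref T s).2 b \ (liftedRR hn pref T s₀).2 b) + (if b = a then 1 else 0) ∧
      ∀ p ∈ (liftedRR hn pref T (s + 1)).2 b \ (liftedRR hn pref T s₀).2 b,
        p ∈ (liftedRR hn pref T s).2 b \ (liftedRR hn pref T s₀).2 b ∨ b = a ∧ p.1 = g := by
  obtain ⟨hlt, hfind⟩ := find?_liftList hg
  rw [← hR] at hfind
  have hstep : liftedRR hn pref T (s + 1) = ((liftedRR hn pref T s).1.erase (g, ⟨c g, hlt⟩),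
      Function.update (liftedRR hn pref T s).2 a
        (insert (g, ⟨c g, hlt⟩) ((liftedRR hn pref T s).2 a))) :=
    rrState_succ_of_find?_eq_some hn _ ha hfind
  have hx : (g, ⟨c g, hlt⟩) ∈ (liftedRR hn pref T s).1 := by simp [hR, remainingCopies]
  have hxB : (g, ⟨c g, hlt⟩) ∉ (liftedRR hn pref T s).2 a :=
    Finset.disjoint_right.mp (disjoint_rrState hn _ s a) hx
  have hxB₀ : (g, ⟨c g, hlt⟩) ∉ (liftedRR hn pref T s₀).2 a :=
    fun h => hxB (rrState_snd_mono hn _ a hs h)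
  refine ⟨by rw [hstep, hR, remainingCopies_erase], fun b => ?_⟩
  rw [hstep]
  by_cases hba : b = a
  · subst hba
    dsimp only
    rw [Function.update_self, Finset.insert_sdiff_of_notMem _ hxB₀,
      Finset.card_insert_of_notMem (by simp [hxB])]
    simp +contextual
  · simp [hba]

/-- Agent `a` keeps picking the lowest remaining copy of `gA a` for `M` rounds: by `hfind` every good
it prefers is exhausted, and by `hcap` the copies of `gA a` do not run out. -/
theorem liftedRR_block {q M : ℕ} {c : Fin m → ℕ} {gA : Fin n → Fin m}
    (hR : (liftedRR hn pref T (n * q)).1 = remainingCopies T c)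
    (hfind : ∀ a, (pref a).find? (fun g => decide (c g < T)) = some (gA a))
    (hcap : ∀ g, c g + #{a | gA a = g} * M ≤ T) :
    (liftedRR hn pref T (n * q + n * M)).1 =
        remainingCopies T (fun g => c g + #{a | gA a = g} * M) ∧
    ∀ a, #((liftedRR hn pref T (n * q + n * M)).2 a \ (liftedRR hn pref T (n * q)).2 a) = M ∧
      ∀ p ∈ (liftedRR hn pref T (n * q + n * M)).2 a \ (liftedRR hn pref T (n * q)).2 a,
        p.1 = gA a := by
  let picks (j : ℕ) (b : Fin n) : ℕ := Nat.count (· ≡ b [MOD n]) j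
  have picks_block (b : Fin n) : picks (n * M) b = M := by
    simp [picks, Nat.count_modEq_card _ hn, Nat.mod_eq_of_lt b.2, Nat.mul_div_cancel_left M hn]
  have picks_succ {j : ℕ} {a : Fin n} (ha : (a : ℕ) = j % n) (b : Fin n) :
      picks (j + 1) b = picks j b + if b = a then 1 else 0 := by
    simp [picks, Nat.count_succ, Nat.ModEq, Fin.ext_iff, Nat.mod_eq_of_lt b.2, ha, eq_comm]
  have picks_le {j : ℕ} (hj : j ≤ n * M) (b : Fin n) : picks j b ≤ M :=
    picks_block b ▸ Nat.count_monotone _ hj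
  let cnt (j : ℕ) (g : Fin m) : ℕ := c g + ∑ b with gA b = g, picks j b
  have invariant : ∀ j ≤ n * M,
      (liftedRR hn pref T (n * q + j)).1 = remainingCopies T (cnt j) ∧
      ∀ b, #((liftedRR hn pref T (n * q + j)).2 b \ (liftedRR hn pref T (n * q)).2 b) =
          picks j b ∧
        ∀ p ∈ (liftedRR hn pref T (n * q + j)).2 b \ (liftedRR hn pref T (n * q)).2 b,
          p.1 = gA b := by
    intro j
    induction j with
    | zero => intro; simpa [picks, cnt] using hR
    | succ j ih =>
      intro hj
      rw [← Nat.add_assoc]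
      obtain ⟨ihR, ihB⟩ := ih (by omega)
      obtain ⟨a, ha⟩ : ∃ a : Fin n, (a : ℕ) = j % n := ⟨⟨j % n, Nat.mod_lt j hn⟩, rfl⟩
      have hlt : cnt j (gA a) < T := by
        have hsum : ∑ b with gA b = gA a, picks j b < ∑ b with gA b = gA a, M :=
          Finset.sum_lt_sum (fun b _ => picks_le (by omega) b)
            ⟨a, by simp, by have := picks_le hj a; rw [picks_succ ha, if_pos rfl] at this; omega⟩
        have hc := hcap (gA a)
        simp only [Finset.sum_const, smul_eq_mul] at hsum
        simp only [cnt]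
        omega
      have hfind' : (pref a).find? (fun g => decide (cnt j g < T)) = some (gA a) :=
        List.find?_eq_some_of_imp (hfind a) (by simpa using hlt)
          (fun g hg => by simp only [decide_eq_true_eq, cnt] at hg ⊢; omega)
      obtain ⟨hR', hB'⟩ := liftedRR_succ hn pref T (Nat.le_add_right _ _)
        (by simp [ha]) ihR hfind'
      have hcnt : Function.update (cnt j) (gA a) (cnt j (gA a) + 1) = cnt (j + 1) := by
        funext g
        simp only [Function.update_apply, cnt, picks_succ ha, Finset.sum_add_distrib,
          Finset.sum_ite_eq', Finset.mem_filter, Finset.mem_univ, true_and]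
        rcases eq_or_ne g (gA a) with rfl | hg
        · simp only [if_true]
          omega
        · simp [hg, hg.symm]
      refine ⟨hcnt ▸ hR', fun b => ?_⟩
      obtain ⟨hcard, hmem⟩ := hB' b
      refine ⟨by rw [hcard, (ihB b).1, picks_succ ha], fun p hp => ?_⟩
      rcases hmem p hp with hp | ⟨rfl, hpg⟩
      · exact (ihB b).2 p hp
      · exact hpg
  obtain ⟨hR, hB⟩ := invariant (n * M) le_rfl
  refine ⟨by simpa [cnt, picks_block] using hR, fun a => ?_⟩
  obtain ⟨hcard, hmem⟩ := hB a
  exact ⟨hcard.trans (picks_block a), hmem⟩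

end LiftedRoundRobin

section ProbabilisticSerial

variable {n m : ℕ} (pref : Fin n → List (Fin m))

theorem mem_of_psTop_eq_some {S : Finset (Fin m)} {a : Fin n} {g : Fin m}
    (h : psTop pref S a = some g) : g ∈ S := by
  simpa using List.find?_some h

theorem exists_psTop_eq_some (horder : ∀ a, IsOrder (pref a)) {S : Finset (Fin m)}
    (hS : S.Nonempty) (a : Fin n) : ∃ g, psTop pref S a = some g := by
  obtain ⟨g, hg⟩ := hS
  exact Option.isSome_iff_exists.mp
    (List.find?_isSome.mpr ⟨g, (horder a).2 g, by simpa using hg⟩)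

theorem psN_eq_empty_of_notMem_psActive {S : Finset (Fin m)} {g : Fin m}
    (hg : g ∉ psActive pref S) : psN pref S g = ∅ := by
  rw [← Finset.not_nonempty_iff_eq_empty]
  rintro ⟨a, ha⟩
  have hgS : g ∈ S := mem_of_psTop_eq_some pref (Finset.mem_filter.mp ha).2
  exact hg (Finset.mem_filter.mpr ⟨hgS, a, ha⟩)

/-- The time `t⁽ᵏ⁺¹⁾(g)` after which the eaters of `g` would have finished it. -/
noncomputable def psFinishTime (S : Finset (Fin m)) (x : Fin n → Fin m → ℝ) (g : Fin m) : ℝ :=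
  (1 - ∑ a, x a g) / #(psN pref S g)

theorem psState_succ_of_not_nonempty {k : ℕ}
    (h : ¬(psActive pref (psState pref k).1).Nonempty) :
    psState pref (k + 1) = psState pref k := by
  rw [psState, dif_neg h]

theorem psState_succ_time {k : ℕ} (h : (psActive pref (psState pref k).1).Nonempty) :
    (psState pref (k + 1)).2.2 = (psActive pref (psState pref k).1).inf' h
      (psFinishTime pref (psState pref k).1 (psState pref k).2.1) := by
  rw [psState, dif_pos h]
  rfl

theorem mem_psState_succ {k : ℕ} (h : (psActive pref (psState pref k).1).Nonempty)
    (g : Fin m) :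
    g ∈ (psState pref (k + 1)).1 ↔ g ∈ (psState pref k).1 ∧
      ¬(g ∈ psActive pref (psState pref k).1 ∧
        psFinishTime pref (psState pref k).1 (psState pref k).2.1 g =
          (psState pref (k + 1)).2.2) := by
  rw [psState_succ_time pref h, psState, dif_pos h]
  exact Finset.mem_filter

theorem psState_succ_alloc (k : ℕ) (a : Fin n) (g : Fin m) :
    (psState pref (k + 1)).2.1 a g = (psState pref k).2.1 a g +
      if psTop pref (psState pref k).1 a = some g then (psState pref (k + 1)).2.2 else 0 := by
  by_cases h : (psActive pref (psState pref k).1).Nonempty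
  · rw [psState_succ_time pref h, psState, dif_pos h]
    dsimp only
    split_ifs
    · rfl
    · simp
  · have hg : psTop pref (psState pref k).1 a ≠ some g := fun hg =>
      h ⟨g, Finset.mem_filter.mpr ⟨mem_of_psTop_eq_some pref hg, a, by simp [psN, hg]⟩⟩
    simp [psState_succ_of_not_nonempty pref h, hg]

theorem sum_psState_succ (k : ℕ) (g : Fin m) :
    ∑ a, (psState pref (k + 1)).2.1 a g = ∑ a, (psState pref k).2.1 a g +
      #(psN pref (psState pref k).1 g) * (psState pref (k + 1)).2.2 := by
  simp only [psState_succ_alloc pref k _ g, Finset.sum_add_distrib]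
  rw [← Finset.sum_filter, Finset.sum_const, nsmul_eq_mul]
  rfl

theorem psState_sum_le_one_and_mem_iff (k : ℕ) (g : Fin m) :
    ∑ a, (psState pref k).2.1 a g ≤ 1 ∧
      (g ∈ (psState pref k).1 ↔ ∑ a, (psState pref k).2.1 a g < 1) := by
  induction k with
  | zero => simp [psState]
  | succ k ih =>
    by_cases h : (psActive pref (psState pref k).1).Nonempty
    swap
    · rwa [psState_succ_of_not_nonempty pref h]
    rw [sum_psState_succ, mem_psState_succ pref h]
    set S := (psState pref k).1
    set x := (psState pref k).2.1
    set t := (psState pref (k + 1)).2.2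
    by_cases hg : g ∈ psActive pref S
    swap
    · simpa [psN_eq_empty_of_notMem_psActive pref hg, hg] using ih
    have hgS : g ∈ S := (Finset.mem_filter.mp hg).1
    have hN : (0 : ℝ) < #(psN pref S g) := by
      exact_mod_cast Finset.card_pos.mpr (Finset.mem_filter.mp hg).2
    have ht : t ≤ psFinishTime pref S x g := by
      have htime : t = (psActive pref S).inf' h (psFinishTime pref S x) := psState_succ_time pref h
      exact htime ▸ Finset.inf'_le _ hg
    have hfin : ∑ a, x a g + #(psN pref S g) * psFinishTime pref S x g = 1 := by
      rw [psFinishTime, mul_div_cancel₀ _ hN.ne']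
      ring
    have hlt : ∑ a, x a g + #(psN pref S g) * t < 1 ↔ t < psFinishTime pref S x g := by
      rw [← hfin, add_lt_add_iff_left, mul_lt_mul_iff_right₀ hN]
    refine ⟨hfin ▸ by gcongr, ?_⟩
    rw [hlt]
    simp only [hgS, hg, true_and]
    exact ⟨fun hne => lt_of_le_of_ne ht (Ne.symm hne), fun hlt => hlt.ne'⟩

end ProbabilisticSerial

section Coupling

variable {n m : ℕ} (pref : Fin n → List (Fin m)) {T : ℕ} {τ : ℕ → ℕ}

/-- `T · Σₐ x⁽ᵏ⁾_{a,g}` when `τ i = T · t⁽ⁱ⁾`: the number of copies of `g` taken in Round-Robin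
by the end of the `k`-th step. -/
noncomputable def eatenCopies (pref : Fin n → List (Fin m)) (τ : ℕ → ℕ) (k : ℕ) (g : Fin m) : ℕ :=
  ∑ i ∈ Finset.range k, #(psN pref (psState pref i).1 g) * τ (i + 1)

theorem eatenCopies_succ (k : ℕ) (g : Fin m) :
    eatenCopies pref τ (k + 1) g =
      eatenCopies pref τ k g + #(psN pref (psState pref k).1 g) * τ (k + 1) :=
  Finset.sum_range_succ _ _

theorem cast_eatenCopies (hτ : ∀ k, (τ k : ℝ) = T * (psState pref k).2.2) (k : ℕ) (g : Fin m) :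
    (eatenCopies pref τ k g : ℝ) = T * ∑ a, (psState pref k).2.1 a g := by
  induction k with
  | zero => simp [eatenCopies, psState]
  | succ k ih =>
    rw [eatenCopies_succ, Nat.cast_add, Nat.cast_mul, ih, sum_psState_succ, hτ]
    ring

theorem eatenCopies_le (hτ : ∀ k, (τ k : ℝ) = T * (psState pref k).2.2) (k : ℕ) (g : Fin m) :
    eatenCopies pref τ k g ≤ T := by
  have h := cast_eatenCopies pref hτ k g
  have h1 := (psState_sum_le_one_and_mem_iff pref k g).1
  have : (eatenCopies pref τ k g : ℝ) ≤ T := h ▸ mul_le_of_le_one_right (Nat.cast_nonneg T) h1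
  exact_mod_cast this

theorem eatenCopies_lt_iff (hτ : ∀ k, (τ k : ℝ) = T * (psState pref k).2.2) (hT : 0 < T)
    (k : ℕ) (g : Fin m) : eatenCopies pref τ k g < T ↔ g ∈ (psState pref k).1 := by
  rw [(psState_sum_le_one_and_mem_iff pref k g).2, ← Nat.cast_lt (α := ℝ), cast_eatenCopies pref hτ,
    mul_lt_iff_lt_one_right (by positivity)]

theorem liftedRR_psStep (hτ : ∀ k, (τ k : ℝ) = T * (psState pref k).2.2) (hT : 0 < T)
    (hn : 0 < n) (horder : ∀ a, IsOrder (pref a)) {k q : ℕ} (hS : (psState pref k).1.Nonempty)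
    (hR : (liftedRR hn pref T (n * q)).1 = remainingCopies T (eatenCopies pref τ k)) :
    (liftedRR hn pref T (n * q + n * τ (k + 1))).1 =
        remainingCopies T (eatenCopies pref τ (k + 1)) ∧
    ∀ a g, psTop pref (psState pref k).1 a = some g →
      #((liftedRR hn pref T (n * q + n * τ (k + 1))).2 a \ (liftedRR hn pref T (n * q)).2 a) =
          τ (k + 1) ∧
        ∀ p ∈ (liftedRR hn pref T (n * q + n * τ (k + 1))).2 a \ (liftedRR hn pref T (n * q)).2 a,
          p.1 = g := by
  choose gA hgA using exists_psTop_eq_some pref horder hS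
  have hN (g : Fin m) : psN pref (psState pref k).1 g = ({a | gA a = g} : Finset (Fin n)) := by
    ext a
    simp [psN, hgA]
  have hfind (a : Fin n) :
      (pref a).find? (fun g => decide (eatenCopies pref τ k g < T)) = some (gA a) := by
    simp only [eatenCopies_lt_iff pref hτ hT]
    exact hgA a
  have hcap (g : Fin m) : eatenCopies pref τ k g + #{a | gA a = g} * τ (k + 1) ≤ T := by
    rw [← hN, ← eatenCopies_succ]
    exact eatenCopies_le pref hτ (k + 1) g
  obtain ⟨hR', hB⟩ := liftedRR_block hn pref T hR hfind hcap
  refine ⟨hR'.trans (congrArg _ (funext fun g => by rw [eatenCopies_succ, hN])), fun a g hg => ?_⟩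
  obtain rfl : gA a = g := Option.some_injective _ ((hgA a).symm.trans hg)
  exact hB a

theorem liftedRR_fst_eq_remainingCopies (hτ : ∀ k, (τ k : ℝ) = T * (psState pref k).2.2)
    (hT : 0 < T) (hn : 0 < n) (horder : ∀ a, IsOrder (pref a)) {K : ℕ}
    (hK : ∀ k < K, (psState pref k).1 ≠ ∅) :
    ∀ j ≤ K, (liftedRR hn pref T (n * ∑ i ∈ Finset.range j, τ (i + 1))).1 =
      remainingCopies T (eatenCopies pref τ j) := by
  intro j
  induction j with
  | zero =>
    intro
    ext
    simp [remainingCopies, eatenCopies, rrState]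
  | succ j ih =>
    intro hj
    rw [Finset.sum_range_succ, mul_add]
    exact (liftedRR_psStep pref hτ hT hn horder (Finset.nonempty_iff_ne_empty.mpr (hK j hj))
      (ih (by omega))).1

end Coupling

theorem stmt13_general (n m : ℕ) (hn : 0 < n) (pref : Fin n → List (Fin m))
    (horder : ∀ a, IsOrder (pref a))
    (K : ℕ)
    (hK' : ∀ k < K, (psState pref k).1 ≠ ∅)
    (τ : ℕ → ℕ)
    (hτ : ∀ k, (τ k : ℝ) = ((n.factorial : ℝ) ^ m) * (psState pref k).2.2) :
    ∀ (a : Fin n) (k : ℕ), 1 ≤ k → k ≤ K →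
      ∀ gka : Fin m, psTop pref (psState pref (k - 1)).1 a = some gka →
        (((rrState n hn (fun b => liftList (n.factorial ^ m) (pref b))
              (n * ∑ i ∈ Finset.range (k + 1), τ i)).2 a \
            (rrState n hn (fun b => liftList (n.factorial ^ m) (pref b))
              (n * ∑ i ∈ Finset.range k, τ i)).2 a).card = τ k) ∧
          ∀ q ∈ (rrState n hn (fun b => liftList (n.factorial ^ m) (pref b))
                (n * ∑ i ∈ Finset.range (k + 1), τ i)).2 a \
              (rrState n hn (fun b => liftList (n.factorial ^ m) (pref b))
                (n * ∑ i ∈ Finset.range k, τ i)).2 a,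
            q.1 = gka := by
  intro a k hk1 hkK gka hgka
  have hT : 0 < n.factorial ^ m := by positivity
  have hτT (k : ℕ) : (τ k : ℝ) = ((n.factorial ^ m : ℕ) : ℝ) * (psState pref k).2.2 := by
    push_cast
    exact hτ k
  have hτ₀ : τ 0 = 0 := by exact_mod_cast (hτ 0).trans (mul_zero _)
  have hstart (j : ℕ) : ∑ i ∈ Finset.range (j + 1), τ i = ∑ i ∈ Finset.range j, τ (i + 1) := by
    rw [Finset.sum_range_succ', hτ₀, add_zero]
  obtain ⟨j, rfl⟩ : ∃ j, k = j + 1 := ⟨k - 1, by omega⟩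
  rw [hstart, hstart, Finset.sum_range_succ, mul_add]
  exact (liftedRR_psStep pref hτT hT hn horder (Finset.nonempty_iff_ne_empty.mpr (hK' j hkK))
    (liftedRR_fst_eq_remainingCopies pref hτT hT hn horder hK' j (by omega))).2 a gka hgka

/-- coupling lemma.  During step `k` of Round-Robin on the lifted
instance (the rounds `T·Σ_{i<k} t⁽ⁱ⁾ + 1` through `T·Σ_{i≤k} t⁽ⁱ⁾`, each round
being `n` consecutive picks), agent `a` picks exactly `T·t⁽ᵏ⁾` goods, all of
which are copies of the good `g_{k,a}` he eats during step `k` of PS. -/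
theorem stmt13 (n m : ℕ) (hn : 0 < n) (pref : Fin n → List (Fin m))
    (horder : ∀ a, IsOrder (pref a))
    (K : ℕ) (hK : (psState pref K).1 = ∅)
    (hK' : ∀ k < K, (psState pref k).1 ≠ ∅)
    (τ : ℕ → ℕ)
    (hτ : ∀ k, (τ k : ℝ) = ((n.factorial : ℝ) ^ m) * (psState pref k).2.2) :
    ∀ (a : Fin n) (k : ℕ), 1 ≤ k → k ≤ K →
      ∀ gka : Fin m, psTop pref (psState pref (k - 1)).1 a = some gka →
        (((rrState n hn (fun b => liftList (n.factorial ^ m) (pref b))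
              (n * ∑ i ∈ Finset.range (k + 1), τ i)).2 a \
            (rrState n hn (fun b => liftList (n.factorial ^ m) (pref b))
              (n * ∑ i ∈ Finset.range k, τ i)).2 a).card = τ k) ∧
          ∀ q ∈ (rrState n hn (fun b => liftList (n.factorial ^ m) (pref b))
                (n * ∑ i ∈ Finset.range (k + 1), τ i)).2 a \
              (rrState n hn (fun b => liftList (n.factorial ^ m) (pref b))
                (n * ∑ i ∈ Finset.range k, τ i)).2 a,
            q.1 = gka :=
  stmt13_general n m hn pref horder K hK' τ hτ
end
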